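/- Let Ω be a locally compact separable metric space and m : BC(Ω) → ℂ a mean, i.e. a linear functional with m(f) ≥ 0 for f ≥ 0 and m(1) = 1. Let m₀ be the unique positive Borel measure on Ω representing m on C_c(Ω) (Riesz representation). Define m(∞) = 1 − sup{m(f) : f ∈ C_c(Ω), 0 ≤ f ≤ 1}. If m(∞) = 0, then m(f) = ∫_Ω f dm₀ for every f ∈ BC(Ω). -/

import Mathlib

open MeasureTheory
open scoped BoundedContinuousFunction

noncomputable section

/-- `m` is a mean: a positive linear functional on `BC(Ω)` with `m(1) = 1`. -/
def IsMean {Ω : Type*} [TopologicalSpace Ω] (m : (Ω →ᵇ ℂ) →ₗ[ℂ] ℂ) : Prop :=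
  (∀ f : Ω →ᵇ ℂ, (∀ x, (f x).im = 0 ∧ 0 ≤ (f x).re) → (m f).im = 0 ∧ 0 ≤ (m f).re) ∧
  m 1 = 1

/-- `m(∞) = 0`, i.e. `sup {m(f) : f ∈ C_c(Ω), 0 ≤ f ≤ 1} = 1`. -/
def MeanInftyZero {Ω : Type*} [TopologicalSpace Ω] (m : (Ω →ᵇ ℂ) →ₗ[ℂ] ℂ) : Prop :=
  sSup {r : ℝ | ∃ f : Ω →ᵇ ℂ, HasCompactSupport ⇑f ∧
    (∀ x, (f x).im = 0 ∧ 0 ≤ (f x).re ∧ (f x).re ≤ 1) ∧ r = (m f).re} = 1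

/-! For a positive functional `φ` on `BC(Ω)` and `0 ≤ h`, one has `|φ(f h)| ≤ ‖f‖ φ(h)`.
Taking `h = 1 - g` with `g ∈ C_c(Ω)`, `0 ≤ g ≤ 1`, and using that `m` and `∫ · dm₀` agree on
`f g` and on `g`, gives `|m f - ∫ f dm₀| ≤ 2 ‖f‖ (1 - m g)`, and `m(∞) = 0` makes the right-hand
side arbitrarily small. The bound for the integral needs `m₀(Ω) ≤ 1`: by inner regularity it is
enough to check compact sets `K`, and Urysohn gives `g ∈ C_c(Ω)`, `1_K ≤ g ≤ 1`, with
`m₀(K) ≤ ∫ g dm₀ = m g ≤ 1`. -/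

open Set
open scoped ComplexOrder

namespace BoundedContinuousFunction

variable {Ω : Type*} [TopologicalSpace Ω]

def re (f : Ω →ᵇ ℂ) : Ω →ᵇ ℂ :=
  (Complex.ofRealCLM.comp Complex.reCLM).compLeftContinuousBounded Ω f

def im (f : Ω →ᵇ ℂ) : Ω →ᵇ ℂ :=
  (Complex.ofRealCLM.comp Complex.imCLM).compLeftContinuousBounded Ω f

@[simp]
lemma re_apply (f : Ω →ᵇ ℂ) (x : Ω) : f.re x = ((f x).re : ℂ) := rfl

@[simp]
lemma im_apply (f : Ω →ᵇ ℂ) (x : Ω) : f.im x = ((f x).im : ℂ) := rfl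

lemma re_add_I_smul_im (f : Ω →ᵇ ℂ) : f.re + Complex.I • f.im = f := by
  ext x
  simpa [mul_comm] using Complex.re_add_im (f x)

end BoundedContinuousFunction

section PositiveFunctional

variable {Ω : Type*} [TopologicalSpace Ω]

def IsPositiveFunctional (m : (Ω →ᵇ ℂ) →ₗ[ℂ] ℂ) : Prop :=
  ∀ f : Ω →ᵇ ℂ, (∀ x, 0 ≤ f x) → 0 ≤ m f

namespace IsPositiveFunctional

variable {m : (Ω →ᵇ ℂ) →ₗ[ℂ] ℂ}

lemma mono (hm : IsPositiveFunctional m) {f g : Ω →ᵇ ℂ} (h : ∀ x, f x ≤ g x) : m f ≤ m g := by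
  simpa using hm (g - f) fun x => sub_nonneg.2 (h x)

lemma im_apply_eq_zero (hm : IsPositiveFunctional m) {f : Ω →ᵇ ℂ} (hf : ∀ x, (f x).im = 0) :
    (m f).im = 0 := by
  have hle : ∀ x, f x ≤ (‖f‖ : ℂ) • (1 : Ω →ᵇ ℂ) x := fun x => by
    simpa [Complex.le_def, hf x] using (Complex.re_le_norm (f x)).trans (f.norm_coe_le_norm x)
  have hsub := Complex.nonneg_iff.1 (hm ((‖f‖ : ℂ) • 1 - f) fun x => sub_nonneg.2 (hle x))
  have hconst := Complex.nonneg_iff.1 (hm ((‖f‖ : ℂ) • 1) fun x => by simp)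
  simp only [map_sub, Complex.sub_im] at hsub
  linarith [hsub.2, hconst.2]

lemma re_apply_re (hm : IsPositiveFunctional m) (f : Ω →ᵇ ℂ) : (m f.re).re = (m f).re := by
  conv_rhs => rw [← f.re_add_I_smul_im]
  simp [hm.im_apply_eq_zero (f := f.im) fun x => by simp]

lemma norm_apply_le (hm : IsPositiveFunctional m) {h φ : Ω →ᵇ ℂ}
    (hle : ∀ x, (‖h x‖ : ℂ) ≤ φ x) : ‖m h‖ ≤ (m φ).re := by
  obtain ⟨c, hc, hch⟩ := Complex.exists_norm_eq_mul_self (m h)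
  calc ‖m h‖ = (m (c • h)).re := by rw [map_smul, smul_eq_mul, ← hch, Complex.ofReal_re]
    _ = (m (c • h).re).re := (hm.re_apply_re _).symm
    _ ≤ (m φ).re := (Complex.le_def.1 (hm.mono fun x => (?_ : _ ≤ _).trans (hle x))).1
  change ((c * h x).re : ℂ) ≤ ‖h x‖
  rw [Complex.real_le_real, ← one_mul ‖h x‖, ← hc, ← norm_mul]
  exact Complex.re_le_norm _

lemma norm_apply_mul_le (hm : IsPositiveFunctional m) (f : Ω →ᵇ ℂ) {h : Ω →ᵇ ℂ}
    (hh : ∀ x, 0 ≤ h x) :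
    ‖m (f * h)‖ ≤ ‖f‖ * (m h).re := by
  simpa using hm.norm_apply_le (φ := (‖f‖ : ℂ) • h) fun x => by
    calc (‖(f * h) x‖ : ℂ) = ((‖f x‖ * ‖h x‖ : ℝ) : ℂ) := by simp
      _ ≤ ((‖f‖ * ‖h x‖ : ℝ) : ℂ) :=
        Complex.real_le_real.2 (mul_le_mul_of_nonneg_right (f.norm_coe_le_norm x) (norm_nonneg _))
      _ = ((‖f‖ : ℂ) • h) x := by simp [Complex.norm_of_nonneg' (hh x)]

end IsPositiveFunctional

end PositiveFunctional

lemma IsMean.isPositiveFunctional {Ω : Type*} [TopologicalSpace Ω] {m : (Ω →ᵇ ℂ) →ₗ[ℂ] ℂ}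
    (hm : IsMean m) : IsPositiveFunctional m := fun f hf => by
  obtain ⟨him, hre⟩ := hm.1 f fun x =>
    ⟨(Complex.nonneg_iff.1 (hf x)).2.symm, (Complex.nonneg_iff.1 (hf x)).1⟩
  exact Complex.nonneg_iff.2 ⟨hre, him.symm⟩

section Comparison

variable {Ω : Type*} [TopologicalSpace Ω] {m m' : (Ω →ᵇ ℂ) →ₗ[ℂ] ℂ}

lemma IsMean.norm_sub_apply_le (hm : IsMean m) (hm' : IsPositiveFunctional m')
    (hm'1 : (m' 1).re ≤ 1) (f : Ω →ᵇ ℂ) {g : Ω →ᵇ ℂ} (hg : ∀ x, g x ≤ 1)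
    (hfg : m (f * g) = m' (f * g)) (hgg : m g = m' g) :
    ‖m f - m' f‖ ≤ 2 * ‖f‖ * (1 - (m g).re) := by
  have h1g : ∀ x, 0 ≤ (1 - g) x := fun x => sub_nonneg.2 (hg x)
  have hsplit : m f - m' f = m (f * (1 - g)) - m' (f * (1 - g)) := by
    simp only [mul_sub, mul_one, map_sub, hfg]
    ring
  calc ‖m f - m' f‖ ≤ ‖m (f * (1 - g))‖ + ‖m' (f * (1 - g))‖ := hsplit ▸ norm_sub_le _ _
    _ ≤ ‖f‖ * (m (1 - g)).re + ‖f‖ * (m' (1 - g)).re :=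
      add_le_add (hm.isPositiveFunctional.norm_apply_mul_le f h1g) (hm'.norm_apply_mul_le f h1g)
    _ ≤ 2 * ‖f‖ * (1 - (m g).re) := by
      simp only [map_sub, hm.2, ← hgg, Complex.sub_re, Complex.one_re]
      nlinarith [norm_nonneg f]

theorem IsMean.eq_of_eqOn_hasCompactSupport (hm : IsMean m) (hinf : MeanInftyZero m)
    (hm' : IsPositiveFunctional m') (hm'1 : (m' 1).re ≤ 1)
    (h : ∀ f : Ω →ᵇ ℂ, HasCompactSupport f → m f = m' f) : m = m' := by
  ext f
  rw [← sub_eq_zero, ← norm_le_zero_iff]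
  set S := {r : ℝ | ∃ f : Ω →ᵇ ℂ, HasCompactSupport ⇑f ∧
    (∀ x, (f x).im = 0 ∧ 0 ≤ (f x).re ∧ (f x).re ≤ 1) ∧ r = (m f).re}
  have hle_one : ∀ g : Ω →ᵇ ℂ, (∀ x, (g x).im = 0 ∧ 0 ≤ (g x).re ∧ (g x).re ≤ 1) →
      ∀ x, g x ≤ (1 : Ω →ᵇ ℂ) x := fun g hg x =>
    Complex.le_def.2 ⟨by simp [(hg x).2.2], by simp [(hg x).1]⟩
  have hne : S.Nonempty := ⟨0, 0, HasCompactSupport.zero, fun x => by simp, by simp⟩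
  have hbdd : BddAbove S := ⟨1, by
    rintro _ ⟨g, -, hg, rfl⟩
    simpa [hm.2] using (Complex.le_def.1 (hm.isPositiveFunctional.mono (hle_one g hg))).1⟩
  have hS : IsLUB S 1 := hinf ▸ isLUB_csSup hne hbdd
  have hsub : S ⊆ {r | ‖m f - m' f‖ ≤ 2 * ‖f‖ * (1 - r)} := by
    rintro _ ⟨g, hgc, hg, rfl⟩
    exact hm.norm_sub_apply_le hm' hm'1 f (hle_one g hg) (h _ hgc.mul_left) (h g hgc)
  simpa using
    closure_minimal hsub (isClosed_le continuous_const (by fun_prop)) (hS.mem_closure hne)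

end Comparison

section Integral

variable {Ω : Type*} [TopologicalSpace Ω] [MeasurableSpace Ω] [OpensMeasurableSpace Ω]

def integralLinearMap (μ : Measure Ω) [IsFiniteMeasure μ] : (Ω →ᵇ ℂ) →ₗ[ℂ] ℂ where
  toFun f := ∫ x, f x ∂μ
  map_add' f g := integral_add (f.integrable μ) (g.integrable μ)
  map_smul' c f := integral_smul c f

@[simp]
lemma integralLinearMap_apply (μ : Measure Ω) [IsFiniteMeasure μ] (f : Ω →ᵇ ℂ) :
    integralLinearMap μ f = ∫ x, f x ∂μ := rfl

lemma isPositiveFunctional_integralLinearMap (μ : Measure Ω) [IsFiniteMeasure μ] :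
    IsPositiveFunctional (integralLinearMap μ) := fun _ hf => integral_nonneg hf

lemma measure_univ_le_of_forall_integral_le [RegularSpace Ω] [LocallyCompactSpace Ω]
    (μ : Measure Ω) [μ.Regular] {c : ℝ}
    (h : ∀ g : C(Ω, ℝ), HasCompactSupport g → (∀ x, g x ∈ Icc 0 1) → ∫ x, g x ∂μ ≤ c) :
    μ univ ≤ ENNReal.ofReal c := by
  rw [isOpen_univ.measure_eq_iSup_isCompact]
  refine iSup₂_le fun K _ => iSup_le fun hK => ?_
  obtain ⟨g, hgK, -, hgc, hg⟩ :=
    exists_continuous_one_zero_of_isCompact hK isClosed_empty (disjoint_empty K)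
  calc μ K ≤ ENNReal.ofReal (∫ x, g x ∂μ) :=
        (g.continuous.integrable_of_hasCompactSupport hgc).measure_le_integral
          (ae_of_all _ fun x => (hg x).1) fun x hx => (hgK hx).ge
    _ ≤ ENNReal.ofReal c := ENNReal.ofReal_le_ofReal (h g hgc hg)

end Integral

lemma IsMean.integral_le_one {Ω : Type*} [TopologicalSpace Ω] [MeasurableSpace Ω]
    {m : (Ω →ᵇ ℂ) →ₗ[ℂ] ℂ} (hm : IsMean m) {μ : Measure Ω}
    (hrep : ∀ f : Ω →ᵇ ℂ, HasCompactSupport ⇑f → m f = ∫ x, f x ∂μ) {g : C(Ω, ℝ)}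
    (hgc : HasCompactSupport g) (hg : ∀ x, g x ≤ 1) : ∫ x, g x ∂μ ≤ 1 := by
  have hgc' : HasCompactSupport fun x => (g x : ℂ) := hgc.comp_left Complex.ofReal_zero
  let gC := ofCompactSupport _ (by fun_prop) hgc'
  have := hm.isPositiveFunctional.mono (f := gC) (g := 1) fun x => by
    simpa [gC, ofCompactSupport] using Complex.real_le_real.2 (hg x)
  rw [hm.2, hrep gC hgc'] at this
  exact Complex.real_le_real.1 (integral_complex_ofReal (f := g) ▸ this)

theorem stmt11 {Ω : Type*} [MetricSpace Ω] [LocallyCompactSpace Ω]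
    [MeasurableSpace Ω] [BorelSpace Ω]
    (m : (Ω →ᵇ ℂ) →ₗ[ℂ] ℂ) (hm : IsMean m)
    (m₀ : Measure Ω) [m₀.Regular]
    (hrep : ∀ f : Ω →ᵇ ℂ, HasCompactSupport ⇑f → m f = ∫ x, f x ∂m₀)
    (hinf : MeanInftyZero m) :
    ∀ f : Ω →ᵇ ℂ, m f = ∫ x, f x ∂m₀ := by
  have hle : m₀ univ ≤ 1 := by
    simpa using measure_univ_le_of_forall_integral_le m₀ fun g hgc hg =>
      hm.integral_le_one hrep hgc fun x => (hg x).2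
  have : IsFiniteMeasure m₀ := ⟨hle.trans_lt ENNReal.one_lt_top⟩
  have hI1 : (integralLinearMap m₀ 1).re ≤ 1 := by
    simpa [measureReal_def] using ENNReal.toReal_le_of_le_ofReal zero_le_one (by simpa using hle)
  intro f
  exact LinearMap.congr_fun (hm.eq_of_eqOn_hasCompactSupport hinf
    (isPositiveFunctional_integralLinearMap m₀) hI1 hrep) f
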